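/- Let k be a positive integer, x a real number with |kx| < 1, and s a complex number with Re(s) > 1. Then ζ(s) · Σ_{n=1}^∞ L_k(x:2n)/(2n)^{s−1} = (Li_s(k²x²) − Li_s(kx))/(2^s − 1), where ζ is the Riemann zeta function and Li_s(z) := Σ_{n=1}^∞ z^n/n^s. -/

import Mathlib

open scoped BigOperators

/-- `L_k(x : n) = (1/n) * ∑_{d ∣ n} μ(n/d) k^d x^d`. -/
noncomputable def Lk (k : ℕ) (x : ℝ) (n : ℕ) : ℝ :=
  (1 / (n : ℝ)) *
    ∑ d ∈ n.divisors, ((ArithmeticFunction.moebius (n / d) : ℤ) : ℝ) * (k : ℝ) ^ d * x ^ d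

/-- The polylogarithm `Li_s(z) = ∑_{n ≥ 1} z^n / n^s`. -/
noncomputable def Li (s z : ℂ) : ℂ := ∑' n : ℕ, z ^ (n + 1) / ((n + 1 : ℕ) : ℂ) ^ s

/-!
Put t = kx and a(n) = ∑_{d ∣ n} μ(n/d) t^d, so that L_k(x:n) = a(n)/n and, by Möbius inversion,
∑_{d ∣ n} a(d) = t^n. The series is the L-series of a restricted to even n; multiplying it by
ζ(s) sums a over the even divisors of n, which gives c(n) = t^n - t^m with m the odd part of n.
As c vanishes at odd n and c(2n) = t^(2n) - t^n + c(n), its L-series satisfies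
L(c, s) = 2^(-s) (Li_s(t²) - Li_s(t) + L(c, s)).
-/
open ArithmeticFunction LSeries
open scoped LSeries.notation ArithmeticFunction.Moebius

section Arithmetic

variable {R : Type*} [CommRing R]

noncomputable def moebiusPow (t : R) (n : ℕ) : R :=
  ∑ d ∈ n.divisors, (μ (n / d) : R) * t ^ d

theorem sum_divisors_moebiusPow (t : R) {n : ℕ} (hn : n ≠ 0) :
    ∑ d ∈ n.divisors, moebiusPow t d = t ^ n := by
  refine sum_eq_iff_sum_mul_moebius_eq.mpr (fun m _ => ?_) n (Nat.pos_of_ne_zero hn)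
  exact Nat.sum_divisorsAntidiagonal' (f := fun a b => (μ a : R) * t ^ b)

theorem Nat.divisors_filter_not_dvd {p n : ℕ} (hp : p.Prime) (hn : n ≠ 0) :
    {d ∈ n.divisors | ¬ p ∣ d} = (ordCompl[p] n).divisors := by
  ext d
  simp only [Finset.mem_filter, Nat.mem_divisors, ne_eq, hn, (Nat.ordCompl_pos p hn).ne',
    not_false_eq_true, and_true]
  constructor
  · rintro ⟨hdn, hpd⟩
    exact Nat.dvd_ordCompl_of_dvd_not_dvd hdn hpd
  · intro hd
    exact ⟨hd.trans (Nat.ordCompl_dvd n p), fun hpd => Nat.not_dvd_ordCompl hp hn (hpd.trans hd)⟩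

theorem sum_divisors_filter_dvd_moebiusPow {p : ℕ} (hp : p.Prime) (t : R) {n : ℕ} (hn : n ≠ 0) :
    ∑ d ∈ n.divisors with p ∣ d, moebiusPow t d = t ^ n - t ^ ordCompl[p] n := by
  rw [eq_sub_iff_add_eq, ← sum_divisors_moebiusPow t (Nat.ordCompl_pos p hn).ne',
    ← Nat.divisors_filter_not_dvd hp hn, Finset.sum_filter_add_sum_filter_not,
    sum_divisors_moebiusPow t hn]

end Arithmetic

theorem LSeries.one_convolution_apply {R : Type*} [Semiring R] (f : ℕ → R) (n : ℕ) :
    ((1 : ℕ → R) ⍟ f) n = ∑ d ∈ n.divisors, f d := by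
  rw [convolution_def]
  exact (Nat.sum_divisorsAntidiagonal' (f := fun a b => (1 : ℕ → R) a * f b)).trans (by simp)

theorem LSeries_eq_tsum_mul_add_one {f : ℕ → ℂ} {p : ℕ} (hp : p ≠ 0)
    (hf : ∀ n, ¬ p ∣ n → f n = 0) (s : ℂ) :
    LSeries f s = ∑' n, f (p * (n + 1)) / ((p * (n + 1) : ℕ) : ℂ) ^ s := by
  have hinj : Function.Injective fun n : ℕ => p * (n + 1) := fun a b h => by
    simpa [hp] using h
  have hsupp : Function.support (term f s) ⊆ Set.range fun n : ℕ => p * (n + 1) := by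
    intro n hn
    rcases eq_or_ne n 0 with rfl | hn0
    · simp at hn
    obtain ⟨m, rfl⟩ : p ∣ n := by
      by_contra hpn
      exact hn (by rw [term_of_ne_zero hn0, hf n hpn, zero_div])
    exact ⟨m - 1, by simp only [Nat.sub_add_cancel (Nat.pos_of_ne_zero (right_ne_zero_of_mul hn0))]⟩
  rw [LSeries, ← hinj.tsum_eq hsupp]
  exact tsum_congr fun n => term_of_ne_zero (by positivity) ..

theorem LSeries_eq_tsum_add_one (f : ℕ → ℂ) (s : ℂ) :
    LSeries f s = ∑' n, f (n + 1) / ((n + 1 : ℕ) : ℂ) ^ s := by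
  simpa using LSeries_eq_tsum_mul_add_one one_ne_zero (fun n h => absurd (one_dvd n) h) s

theorem LSeries_pow (z s : ℂ) : LSeries (fun n => z ^ n) s = Li s z :=
  LSeries_eq_tsum_add_one _ s

theorem LSeriesSummable_pow {z s : ℂ} (hz : ‖z‖ ≤ 1) (hs : 1 < s.re) :
    LSeriesSummable (fun n => z ^ n) s :=
  LSeriesSummable_of_bounded_of_one_lt_re (m := 1)
    (fun n _ => by simpa only [norm_pow] using pow_le_one₀ (norm_nonneg z) hz) hs

theorem natCast_cpow_sub_one_ne_zero {p : ℕ} (hp : 1 < p) {s : ℂ} (hs : 0 < s.re) :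
    (p : ℂ) ^ s - 1 ≠ 0 := by
  have hnorm : 1 < ‖(p : ℂ) ^ s‖ := by
    rw [Complex.norm_natCast_cpow_of_pos (by omega)]
    exact Real.one_lt_rpow (by exact_mod_cast hp) hs
  intro h
  rw [sub_eq_zero.mp h, norm_one] at hnorm
  exact hnorm.false

section Complex

variable {p : ℕ} {t s : ℂ}

theorem norm_moebiusPow_le (ht : ‖t‖ < 1) (n : ℕ) : ‖moebiusPow t n‖ ≤ (1 - ‖t‖)⁻¹ :=
  calc ‖moebiusPow t n‖ ≤ ∑ d ∈ n.divisors, ‖t‖ ^ d := by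
        refine (norm_sum_le _ _).trans (Finset.sum_le_sum fun d _ => ?_)
        rw [norm_mul, norm_pow, Complex.norm_intCast]
        exact mul_le_of_le_one_left (by positivity) (by exact_mod_cast abs_moebius_le_one)
    _ ≤ ∑' d, ‖t‖ ^ d :=
        Summable.sum_le_tsum _ (fun _ _ => by positivity)
          (summable_geometric_of_lt_one (norm_nonneg t) ht)
    _ = (1 - ‖t‖)⁻¹ := tsum_geometric_of_lt_one (norm_nonneg t) ht

theorem LSeries_pow_sub_pow_ordCompl (hp : p.Prime) (ht : ‖t‖ ≤ 1) (hs : 1 < s.re) :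
    LSeries (fun n => t ^ n - t ^ ordCompl[p] n) s =
      (Li s (t ^ p) - Li s t) / ((p : ℂ) ^ s - 1) := by
  set c : ℕ → ℂ := fun n => t ^ n - t ^ ordCompl[p] n
  have hpow_le (m : ℕ) : ‖t ^ m‖ ≤ 1 := by
    simpa only [norm_pow] using pow_le_one₀ (norm_nonneg t) ht
  have hc : LSeriesSummable c s :=
    LSeriesSummable_of_bounded_of_one_lt_re (m := 2)
      (fun n _ => (norm_sub_le _ _).trans (by linarith [hpow_le n, hpow_le (ordCompl[p] n)])) hs
  have hc_of_not_dvd (n : ℕ) (hn : ¬ p ∣ n) : c n = 0 := by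
    simp [c, (Nat.ordCompl_eq_self_iff_zero_or_not_dvd n hp).mpr (Or.inr hn)]
  have hc_mul (n : ℕ) : c (p * n) = ((t ^ p) ^ n - t ^ n) + c n := by
    simpa [c, ← pow_mul] using congrArg (t ^ ·) (Nat.ordCompl_self_pow_mul n 1 hp)
  have hps : (p : ℂ) ^ s ≠ 0 := by simp [Complex.cpow_eq_zero_iff, hp.ne_zero]
  have key : LSeries c s = ((p : ℂ) ^ s)⁻¹ * (Li s (t ^ p) - Li s t + LSeries c s) := by
    have hsum_tp := LSeriesSummable_pow (hpow_le p) hs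
    have hsum_t := LSeriesSummable_pow ht hs
    rw [← LSeries_pow, ← LSeries_pow, ← LSeries_sub hsum_tp hsum_t,
      ← LSeries_add (hsum_tp.sub hsum_t) hc,
      LSeries_eq_tsum_mul_add_one hp.ne_zero hc_of_not_dvd, LSeries_eq_tsum_add_one,
      ← tsum_mul_left]
    refine tsum_congr fun n => ?_
    rw [hc_mul, Nat.cast_mul, Complex.natCast_mul_natCast_cpow,
      div_mul_eq_div_div_swap, div_eq_inv_mul _ ((p : ℂ) ^ s)]
    rfl
  rw [eq_div_iff (natCast_cpow_sub_one_ne_zero hp.one_lt (by linarith))]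
  rw [eq_inv_mul_iff_mul_eq₀ hps] at key
  linear_combination key

theorem riemannZeta_mul_LSeries_moebiusPow_dvd (hp : p.Prime) (ht : ‖t‖ < 1) (hs : 1 < s.re) :
    riemannZeta s * LSeries (fun n => if p ∣ n then moebiusPow t n else 0) s =
      (Li s (t ^ p) - Li s t) / ((p : ℂ) ^ s - 1) := by
  have hg : LSeriesSummable (fun n => if p ∣ n then moebiusPow t n else 0) s := by
    refine LSeriesSummable_of_bounded_of_one_lt_re (m := (1 - ‖t‖)⁻¹) (fun n _ => ?_) hs
    split_ifs
    · exact norm_moebiusPow_le ht n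
    · rw [norm_zero, inv_nonneg, sub_nonneg]
      exact ht.le
  rw [← LSeries_one_eq_riemannZeta hs, ← LSeries_convolution' (LSeriesSummable_one_iff.mpr hs) hg,
    ← LSeries_pow_sub_pow_ordCompl hp ht.le hs]
  refine LSeries_congr (fun {n} hn => ?_) s
  rw [one_convolution_apply, ← Finset.sum_filter, sum_divisors_filter_dvd_moebiusPow hp t hn]

end Complex

theorem ofReal_Lk_div_cpow (k : ℕ) (x : ℝ) {n : ℕ} (hn : n ≠ 0) (s : ℂ) :
    (Lk k x n : ℂ) / (n : ℂ) ^ (s - 1) = moebiusPow ((k * x : ℝ) : ℂ) n / (n : ℂ) ^ s := by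
  have hn' : (n : ℂ) ≠ 0 := Nat.cast_ne_zero.mpr hn
  rw [Complex.cpow_sub _ _ hn', Complex.cpow_one, Lk, moebiusPow]
  push_cast
  field_simp
  simp only [mul_pow, mul_assoc]

theorem stmt6_general (k : ℕ) (x : ℝ) (hx : |(k : ℝ) * x| < 1)
    (s : ℂ) (hs : 1 < s.re) :
    riemannZeta s *
        ∑' n : ℕ, ((Lk k x (2 * (n + 1)) : ℝ) : ℂ) / ((2 * (n + 1) : ℕ) : ℂ) ^ (s - 1)
      = (Li s ((((k : ℝ) * x : ℝ) : ℂ) ^ 2) - Li s (((k : ℝ) * x : ℝ) : ℂ)) /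
          ((2 : ℂ) ^ s - 1) := by
  have ht : ‖(((k : ℝ) * x : ℝ) : ℂ)‖ < 1 := by rwa [Complex.norm_real, Real.norm_eq_abs]
  have key := riemannZeta_mul_LSeries_moebiusPow_dvd Nat.prime_two ht hs
  rw [Nat.cast_ofNat, LSeries_eq_tsum_mul_add_one two_ne_zero (fun n hn => if_neg hn)] at key
  rw [← key]
  congr 2 with n
  rw [if_pos (dvd_mul_right 2 _), ofReal_Lk_div_cpow k x (by positivity) s]

theorem stmt6 (k : ℕ) (hk : 0 < k) (x : ℝ) (hx : |(k : ℝ) * x| < 1)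
    (s : ℂ) (hs : 1 < s.re) :
    riemannZeta s *
        ∑' n : ℕ, ((Lk k x (2 * (n + 1)) : ℝ) : ℂ) / ((2 * (n + 1) : ℕ) : ℂ) ^ (s - 1)
      = (Li s ((((k : ℝ) * x : ℝ) : ℂ) ^ 2) - Li s (((k : ℝ) * x : ℝ) : ℂ)) /
          ((2 : ℂ) ^ s - 1) :=
  stmt6_general k x hx s hs
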